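/- arXiv:0804.1391 — 3 statements merged into one kernel-verified Lean document; each statement's English description precedes it below -/
import Mathlib

section
/- Let k be a local field of characteristic 0 and let Q be a bounded subset of M_d(k) containing the identity. Then the limit lim_{n→∞} E_k(Q^n)^{1/n} exists and R_k(Q) = lim_{n→∞} E_k(Q^n)^{1/n} = inf_{n∈ℕ} E_k(Q^n)^{1/n}. -/
/-!
STATEMENT 8.  Let `k` be a local field of characteristic 0 and `Q` a bounded subset of
`M_d(k)` containing the identity.  Then `lim_n E_k(Q^n)^{1/n}` exists and equals both
`R_k(Q)` and `inf_{n ≥ 1} E_k(Q^n)^{1/n}`.  A local field of characteristic 0 is either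
archimedean (`ℝ` or `ℂ`, both covered by the case of subsets of `M_d(ℂ)`, since `ℂ` is
the common algebraic closure and the Hermitian norm on `ℂ^d` restricts to the Euclidean
norm on `ℝ^d`), or non-archimedean (a finite extension of some `ℚ_p`, with `v` the
unique absolute value on its algebraic closure extending the `p`-adic one, supplied as
data with the extension property).  The statement is the conjunction of the two cases.
-/

open Filter
open scoped Pointwise

noncomputable section

/-- The operator norm on `d × d` complex matrices induced by the Hermitian (Euclidean)
norm on `ℂ^d`.  For matrices with entries in `ℝ ⊆ ℂ` this restricts to the operator norm
induced by the Euclidean norm on `ℝ^d`, and `ℂ` is the algebraic closure of both `ℝ` and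
`ℂ`; hence this covers both archimedean local fields. -/
def copNorm (d : ℕ) (A : Matrix (Fin d) (Fin d) ℂ) : ℝ :=
  ‖Matrix.toEuclideanCLM (𝕜 := ℂ) A‖

/-- The norm `‖Q‖` of a set of matrices. -/
def cNorm (d : ℕ) (Q : Set (Matrix (Fin d) (Fin d) ℂ)) : ℝ :=
  sSup (copNorm d '' Q)

/-- `Q` is a bounded set of matrices. -/
def cBounded (d : ℕ) (Q : Set (Matrix (Fin d) (Fin d) ℂ)) : Prop :=
  ∃ C : ℝ, ∀ A ∈ Q, copNorm d A ≤ C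

/-- The minimal norm `E(Q) = inf_{x ∈ GL_d} ‖x Q x⁻¹‖`. -/
def cE (d : ℕ) (Q : Set (Matrix (Fin d) (Fin d) ℂ)) : ℝ :=
  sInf { r | ∃ x : (Matrix (Fin d) (Fin d) ℂ)ˣ,
    r = cNorm d ((fun g => x.val * g * x.inv) '' Q) }

/-- The maximal eigenvalue `Λ(Q) = max {|λ| : λ eigenvalue of some q ∈ Q}`. -/
def cLambda (d : ℕ) (Q : Set (Matrix (Fin d) (Fin d) ℂ)) : ℝ :=
  sSup { r | ∃ A ∈ Q, ∃ μ : ℂ, (Matrix.charpoly A).IsRoot μ ∧ r = ‖μ‖ }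

/-- The spectral radius `R(Q) = lim_n ‖Q^n‖^{1/n}` (the limit exists by
submultiplicativity; `Filter.limUnder` selects it). -/
def cR (d : ℕ) (Q : Set (Matrix (Fin d) (Fin d) ℂ)) : ℝ :=
  limUnder atTop fun n : ℕ => cNorm d (Q ^ n) ^ ((n : ℝ)⁻¹)

/-- The sup norm on `L^d` associated to an absolute value `v` on `L`. -/
def vVec {L : Type*} [Field L] (v : AbsoluteValue L ℝ) (d : ℕ) (x : Fin d → L) : ℝ :=
  sSup (Set.range fun i => v (x i))

/-- The operator norm on `d × d` matrices over `L` induced by the sup norm on `L^d`. -/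
def vOp {L : Type*} [Field L] (v : AbsoluteValue L ℝ) (d : ℕ)
    (A : Matrix (Fin d) (Fin d) L) : ℝ :=
  sInf { c | 0 ≤ c ∧ ∀ x : Fin d → L, vVec v d (A.mulVec x) ≤ c * vVec v d x }

/-- The norm `‖Q‖` of a set of matrices over `L`. -/
def vNorm {L : Type*} [Field L] (v : AbsoluteValue L ℝ) (d : ℕ)
    (Q : Set (Matrix (Fin d) (Fin d) L)) : ℝ :=
  sSup (vOp v d '' Q)

/-- The minimal norm `E(Q) = inf_{x ∈ GL_d} ‖x Q x⁻¹‖`. -/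
def vE {L : Type*} [Field L] (v : AbsoluteValue L ℝ) (d : ℕ)
    (Q : Set (Matrix (Fin d) (Fin d) L)) : ℝ :=
  sInf { r | ∃ x : (Matrix (Fin d) (Fin d) L)ˣ,
    r = vNorm v d ((fun g => x.val * g * x.inv) '' Q) }

/-- The maximal eigenvalue `Λ(Q) = max {v(μ) : μ eigenvalue of some q ∈ Q}`. -/
def vLambda {L : Type*} [Field L] (v : AbsoluteValue L ℝ) (d : ℕ)
    (Q : Set (Matrix (Fin d) (Fin d) L)) : ℝ :=
  sSup { r | ∃ A ∈ Q, ∃ μ : L, (Matrix.charpoly A).IsRoot μ ∧ r = v μ }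

/-- The spectral radius `R(Q) = lim_n ‖Q^n‖^{1/n}`. -/
def vR {L : Type*} [Field L] (v : AbsoluteValue L ℝ) (d : ℕ)
    (Q : Set (Matrix (Fin d) (Fin d) L)) : ℝ :=
  limUnder atTop fun n : ℕ => vNorm v d (Q ^ n) ^ ((n : ℝ)⁻¹)

/-!
For a submultiplicative norm on a monoid, `a n = ‖Q ^ n‖` is submultiplicative and at least `1`
(as `1 ∈ Q`), so by Fekete's lemma `a n ^ (1 / n)` tends to `R = inf_n a n ^ (1 / n)`.
Clearly `E(Q ^ n) ≤ ‖Q ^ n‖`. Conversely, if the conjugate `x Q ^ n x⁻¹` has norm `N`, then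
`Q ^ (n m) = x⁻¹ (x Q ^ n x⁻¹) ^ m x` gives `R ^ (n m) ≤ ‖x⁻¹‖ ‖x‖ N ^ m` for every `m`, hence
`R ^ n ≤ N`. Thus `R ≤ E(Q ^ n) ^ (1 / n) ≤ ‖Q ^ n‖ ^ (1 / n)`, and both claims follow by
squeezing. Both cases of the theorem are instances, with the operator norms `copNorm` and `vOp`.
-/

open Set Topology

lemma exists_tendsto_pow_inv_of_submultiplicative {a : ℕ → ℝ} (ha : ∀ n, 1 ≤ a n)
    (hmul : ∀ m n, a (m + n) ≤ a m * a n) :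
    ∃ L, 0 < L ∧ Tendsto (fun n : ℕ => a n ^ (n : ℝ)⁻¹) atTop (𝓝 L) ∧
      ∀ n ≠ 0, L ^ n ≤ a n := by
  have ha0 n : 0 < a n := one_pos.trans_le (ha n)
  have hsub : Subadditive fun n => Real.log (a n) := fun m n => by
    rw [← Real.log_mul (ha0 m).ne' (ha0 n).ne']
    exact Real.log_le_log (ha0 _) (hmul m n)
  have hbdd : BddBelow (range fun n : ℕ => Real.log (a n) / n) :=
    ⟨0, by rintro _ ⟨n, rfl⟩; exact div_nonneg (Real.log_nonneg (ha n)) n.cast_nonneg⟩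
  have hexp n : Real.exp (Real.log (a n) / n) = a n ^ (n : ℝ)⁻¹ := by
    rw [Real.rpow_def_of_pos (ha0 n), div_eq_mul_inv]
  refine ⟨Real.exp hsub.lim, Real.exp_pos _, ?_, fun n hn => ?_⟩
  · simpa only [Function.comp_def, hexp] using
      (Real.continuous_exp.tendsto _).comp (hsub.tendsto_lim hbdd)
  · calc Real.exp hsub.lim ^ n ≤ (a n ^ (n : ℝ)⁻¹) ^ n := by
          gcongr
          rw [← hexp]
          exact Real.exp_le_exp.2 (hsub.lim_le_div hbdd hn)
      _ = a n := Real.rpow_inv_natCast_pow (ha0 n).le hn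

lemma le_of_eventually_pow_le_mul_pow {b N C : ℝ} (hN : 0 < N)
    (h : ∀ᶠ m in atTop, b ^ m ≤ C * N ^ m) : b ≤ N := by
  by_contra! hlt
  have hgrow := (tendsto_pow_atTop_atTop_of_one_lt ((one_lt_div hN).2 hlt)).eventually_gt_atTop C
  obtain ⟨m, hCm, hm⟩ := (hgrow.and h).exists
  rw [div_pow, lt_div_iff₀ (by positivity)] at hCm
  linarith

lemma sInf_eq_of_tendsto_of_le {f : ℕ → ℝ} {L : ℝ} (hf : Tendsto f atTop (𝓝 L))
    (hL : ∀ n, 0 < n → L ≤ f n) : sInf {x | ∃ n, 0 < n ∧ x = f n} = L := by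
  have hbdd : BddBelow {x | ∃ n, 0 < n ∧ x = f n} :=
    ⟨L, by rintro _ ⟨n, hn, rfl⟩; exact hL n hn⟩
  apply le_antisymm
  · refine ge_of_tendsto hf ?_
    filter_upwards [eventually_gt_atTop 0] with n hn
    exact csInf_le hbdd ⟨n, hn, rfl⟩
  · exact le_csInf ⟨f 1, 1, one_pos, rfl⟩ (by rintro _ ⟨n, hn, rfl⟩; exact hL n hn)

section SetNorm

variable {M : Type*} {nrm : M → ℝ} {S T : Set M}

def setNorm (nrm : M → ℝ) (S : Set M) : ℝ := sSup (nrm '' S)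

lemma setNorm_nonneg (h0 : ∀ a, 0 ≤ nrm a) (S : Set M) : 0 ≤ setNorm nrm S :=
  Real.sSup_nonneg (forall_mem_image.2 fun a _ => h0 a)

lemma le_setNorm (hS : BddAbove (nrm '' S)) {a : M} (ha : a ∈ S) : nrm a ≤ setNorm nrm S :=
  le_csSup hS (mem_image_of_mem nrm ha)

variable [Monoid M]

def minConjNorm (nrm : M → ℝ) (S : Set M) : ℝ :=
  sInf {r | ∃ x : Mˣ, r = setNorm nrm ((fun g => x.val * g * x.inv) '' S)}

lemma one_le_setNorm (h1 : nrm 1 = 1) (hS : BddAbove (nrm '' S)) (h1S : 1 ∈ S) :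
    1 ≤ setNorm nrm S :=
  h1 ▸ le_setNorm hS h1S

lemma setNorm_mul_le (h0 : ∀ a, 0 ≤ nrm a) (hmul : ∀ a b, nrm (a * b) ≤ nrm a * nrm b)
    (hS : BddAbove (nrm '' S)) (hT : BddAbove (nrm '' T)) :
    setNorm nrm (S * T) ≤ setNorm nrm S * setNorm nrm T := by
  refine Real.sSup_le ?_ (mul_nonneg (setNorm_nonneg h0 S) (setNorm_nonneg h0 T))
  rintro _ ⟨_, ⟨a, ha, b, hb, rfl⟩, rfl⟩
  exact (hmul a b).trans
    (mul_le_mul (le_setNorm hS ha) (le_setNorm hT hb) (h0 b) (setNorm_nonneg h0 S))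

lemma norm_le_setNorm_pow (h0 : ∀ a, 0 ≤ nrm a) (h1 : nrm 1 = 1)
    (hmul : ∀ a b, nrm (a * b) ≤ nrm a * nrm b) (hS : BddAbove (nrm '' S)) :
    ∀ m : ℕ, ∀ a ∈ S ^ m, nrm a ≤ setNorm nrm S ^ m
  | 0, a, ha => by rw [pow_zero, Set.mem_one] at ha; rw [ha, h1, pow_zero]
  | m + 1, _, hab => by
    obtain ⟨a, ha, b, hb, rfl⟩ := mem_mul.1 (pow_succ S m ▸ hab)
    calc nrm (a * b) ≤ nrm a * nrm b := hmul a b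
      _ ≤ setNorm nrm S ^ m * setNorm nrm S :=
        mul_le_mul (norm_le_setNorm_pow h0 h1 hmul hS m a ha) (le_setNorm hS hb) (h0 b)
          (pow_nonneg (setNorm_nonneg h0 S) m)
      _ = setNorm nrm S ^ (m + 1) := (pow_succ _ _).symm

lemma bddAbove_image_pow (h0 : ∀ a, 0 ≤ nrm a) (h1 : nrm 1 = 1)
    (hmul : ∀ a b, nrm (a * b) ≤ nrm a * nrm b) (hS : BddAbove (nrm '' S)) (m : ℕ) :
    BddAbove (nrm '' (S ^ m)) :=
  ⟨_, forall_mem_image.2 (norm_le_setNorm_pow h0 h1 hmul hS m)⟩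

lemma image_conj_pow (x : Mˣ) (S : Set M) (m : ℕ) :
    (fun g => x.val * g * x.inv) '' (S ^ m) = ((fun g => x.val * g * x.inv) '' S) ^ m :=
  image_pow (MulDistribMulAction.toMonoidHom M (ConjAct.toConjAct x)) S m

lemma norm_le_norm_conj (hmul : ∀ a b, nrm (a * b) ≤ nrm a * nrm b) (h0 : ∀ a, 0 ≤ nrm a)
    (x : Mˣ) (g : M) : nrm g ≤ nrm x.inv * nrm (x.val * g * x.inv) * nrm x.val := by
  have hg : g = x.inv * (x.val * g * x.inv) * x.val := by
    simp only [Units.inv_eq_val_inv, ← mul_assoc, Units.inv_mul, one_mul,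
      Units.inv_mul_cancel_right]
  calc nrm g = nrm (x.inv * (x.val * g * x.inv) * x.val) := by rw [← hg]
    _ ≤ nrm x.inv * nrm (x.val * g * x.inv) * nrm x.val :=
      (hmul _ _).trans (mul_le_mul_of_nonneg_right (hmul _ _) (h0 _))

lemma bddAbove_image_conj (h0 : ∀ a, 0 ≤ nrm a) (hmul : ∀ a b, nrm (a * b) ≤ nrm a * nrm b)
    (hS : BddAbove (nrm '' S)) (x : Mˣ) :
    BddAbove (nrm '' ((fun g => x.val * g * x.inv) '' S)) := by
  refine ⟨nrm x.val * setNorm nrm S * nrm x.inv, ?_⟩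
  rintro _ ⟨_, ⟨g, hg, rfl⟩, rfl⟩
  calc nrm (x.val * g * x.inv) ≤ nrm x.val * nrm g * nrm x.inv :=
        (hmul _ _).trans (mul_le_mul_of_nonneg_right (hmul _ _) (h0 _))
    _ ≤ nrm x.val * setNorm nrm S * nrm x.inv :=
        mul_le_mul_of_nonneg_right (mul_le_mul_of_nonneg_left (le_setNorm hS hg) (h0 _)) (h0 _)

lemma le_setNorm_conj_of_pow_le (h0 : ∀ a, 0 ≤ nrm a) (h1 : nrm 1 = 1)
    (hmul : ∀ a b, nrm (a * b) ≤ nrm a * nrm b) (hS : BddAbove (nrm '' S)) (h1S : 1 ∈ S)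
    {L : ℝ} (hL : ∀ m ≠ 0, L ^ m ≤ setNorm nrm (S ^ m)) (x : Mˣ) :
    L ≤ setNorm nrm ((fun g => x.val * g * x.inv) '' S) := by
  set N := setNorm nrm ((fun g => x.val * g * x.inv) '' S)
  have hS' := bddAbove_image_conj h0 hmul hS x
  have hN : 0 < N := one_pos.trans_le <| one_le_setNorm h1 hS' ⟨1, h1S, by simp⟩
  refine le_of_eventually_pow_le_mul_pow hN (C := nrm x.inv * nrm x.val) ?_
  filter_upwards [eventually_ne_atTop 0] with m hm
  have hconj : ∀ g ∈ S ^ m, nrm g ≤ nrm x.inv * N ^ m * nrm x.val := fun g hg =>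
    (norm_le_norm_conj hmul h0 x g).trans <| mul_le_mul_of_nonneg_right
      (mul_le_mul_of_nonneg_left (norm_le_setNorm_pow h0 h1 hmul hS' m _
        (image_conj_pow x S m ▸ mem_image_of_mem _ hg)) (h0 _)) (h0 _)
  calc L ^ m ≤ setNorm nrm (S ^ m) := hL m hm
    _ ≤ nrm x.inv * N ^ m * nrm x.val :=
      Real.sSup_le (forall_mem_image.2 hconj) (by have := h0 x.inv; have := h0 x.val; positivity)
    _ = nrm x.inv * nrm x.val * N ^ m := by ring

lemma le_minConjNorm_of_pow_le (h0 : ∀ a, 0 ≤ nrm a) (h1 : nrm 1 = 1)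
    (hmul : ∀ a b, nrm (a * b) ≤ nrm a * nrm b) (hS : BddAbove (nrm '' S)) (h1S : 1 ∈ S)
    {L : ℝ} (hL : ∀ m ≠ 0, L ^ m ≤ setNorm nrm (S ^ m)) : L ≤ minConjNorm nrm S :=
  le_csInf ⟨_, 1, rfl⟩ <| by
    rintro _ ⟨x, rfl⟩
    exact le_setNorm_conj_of_pow_le h0 h1 hmul hS h1S hL x

lemma minConjNorm_nonneg (h0 : ∀ a, 0 ≤ nrm a) (S : Set M) : 0 ≤ minConjNorm nrm S :=
  Real.sInf_nonneg <| by
    rintro _ ⟨x, rfl⟩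
    exact setNorm_nonneg h0 _

lemma minConjNorm_le_setNorm (h0 : ∀ a, 0 ≤ nrm a) (S : Set M) :
    minConjNorm nrm S ≤ setNorm nrm S :=
  csInf_le ⟨0, by rintro _ ⟨x, rfl⟩; exact setNorm_nonneg h0 _⟩ ⟨1, by simp⟩

theorem tendsto_minConjNorm_pow (h0 : ∀ a, 0 ≤ nrm a) (h1 : nrm 1 = 1)
    (hmul : ∀ a b, nrm (a * b) ≤ nrm a * nrm b) {Q : Set M} (hQ : BddAbove (nrm '' Q))
    (h1Q : 1 ∈ Q) :
    Tendsto (fun n : ℕ => minConjNorm nrm (Q ^ n) ^ (n : ℝ)⁻¹) atTop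
        (𝓝 (limUnder atTop fun n : ℕ => setNorm nrm (Q ^ n) ^ (n : ℝ)⁻¹)) ∧
      (limUnder atTop fun n : ℕ => setNorm nrm (Q ^ n) ^ (n : ℝ)⁻¹) =
        sInf {x | ∃ n : ℕ, 0 < n ∧ x = minConjNorm nrm (Q ^ n) ^ (n : ℝ)⁻¹} := by
  have hbdd := bddAbove_image_pow h0 h1 hmul hQ
  obtain ⟨L, hL0, hlim, hLpow⟩ := exists_tendsto_pow_inv_of_submultiplicative
    (fun n => one_le_setNorm h1 (hbdd n) (one_mem_pow (n := n) h1Q))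
    (fun m n => pow_add Q m n ▸ setNorm_mul_le h0 hmul (hbdd m) (hbdd n))
  have hLE (n : ℕ) (hn : 0 < n) : L ≤ minConjNorm nrm (Q ^ n) ^ (n : ℝ)⁻¹ := by
    rw [← Real.pow_rpow_inv_natCast hL0.le hn.ne']
    gcongr
    refine le_minConjNorm_of_pow_le h0 h1 hmul (hbdd n) (one_mem_pow (n := n) h1Q) fun m hm => ?_
    rw [← pow_mul, ← pow_mul]
    exact hLpow _ (mul_ne_zero hn.ne' hm)
  have hE : Tendsto (fun n : ℕ => minConjNorm nrm (Q ^ n) ^ (n : ℝ)⁻¹) atTop (𝓝 L) :=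
    tendsto_of_tendsto_of_tendsto_of_le_of_le' tendsto_const_nhds hlim
      (eventually_gt_atTop 0 |>.mono hLE)
      (Eventually.of_forall fun n => by
        gcongr
        exacts [minConjNorm_nonneg h0 _, minConjNorm_le_setNorm h0 _])
  rw [hlim.limUnder_eq]
  exact ⟨hE, (sInf_eq_of_tendsto_of_le hE hLE).symm⟩

end SetNorm

section AbsoluteValueNorm

variable {L : Type*} [Field L] (v : AbsoluteValue L ℝ) {d : ℕ}

lemma vVec_nonneg (x : Fin d → L) : 0 ≤ vVec v d x :=
  Real.sSup_nonneg (forall_mem_range.2 fun _ => v.nonneg _)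

lemma le_vVec (x : Fin d → L) (i : Fin d) : v (x i) ≤ vVec v d x :=
  le_csSup (finite_range _).bddAbove ⟨i, rfl⟩

lemma vVec_mulVec_le (A : Matrix (Fin d) (Fin d) L) (x : Fin d → L) :
    vVec v d (A.mulVec x) ≤ (∑ i, ∑ j, v (A i j)) * vVec v d x := by
  refine Real.sSup_le (forall_mem_range.2 fun i => ?_) (by positivity [vVec_nonneg v x])
  calc v ((A.mulVec x) i) ≤ ∑ j, v (A i j) * v (x j) := by
        simpa only [Matrix.mulVec, dotProduct, map_mul] using
          v.sum_le Finset.univ fun j => A i j * x j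
    _ ≤ ∑ j, v (A i j) * vVec v d x :=
        Finset.sum_le_sum fun j _ => mul_le_mul_of_nonneg_left (le_vVec v x j) (v.nonneg _)
    _ ≤ (∑ i, ∑ j, v (A i j)) * vVec v d x := by
        rw [← Finset.sum_mul]
        refine mul_le_mul_of_nonneg_right ?_ (vVec_nonneg v x)
        exact Finset.single_le_sum (f := fun i => ∑ j, v (A i j))
          (fun i _ => Finset.sum_nonneg fun j _ => v.nonneg _) (Finset.mem_univ i)

lemma vOp_nonneg (A : Matrix (Fin d) (Fin d) L) : 0 ≤ vOp v d A :=
  Real.sInf_nonneg fun _ hc => hc.1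

lemma vVec_mulVec_le_vOp (A : Matrix (Fin d) (Fin d) L) (x : Fin d → L) :
    vVec v d (A.mulVec x) ≤ vOp v d A * vVec v d x := by
  have hsum := vVec_mulVec_le v A
  rcases (vVec_nonneg v x).eq_or_lt with hx | hx
  · simpa [← hx] using hsum x
  · rw [← div_le_iff₀ hx]
    refine le_csInf ⟨_, by positivity [v.nonneg], hsum⟩ fun c hc => ?_
    exact (div_le_iff₀ hx).2 (hc.2 x)

lemma vOp_mul (A B : Matrix (Fin d) (Fin d) L) :
    vOp v d (A * B) ≤ vOp v d A * vOp v d B := by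
  refine csInf_le ⟨0, fun _ hc => hc.1⟩
    ⟨mul_nonneg (vOp_nonneg v A) (vOp_nonneg v B), fun x => ?_⟩
  calc vVec v d ((A * B).mulVec x) ≤ vOp v d A * vVec v d (B.mulVec x) := by
        rw [← Matrix.mulVec_mulVec]; exact vVec_mulVec_le_vOp v A _
    _ ≤ vOp v d A * (vOp v d B * vVec v d x) := by
        gcongr
        exacts [vOp_nonneg v A, vVec_mulVec_le_vOp v B x]
    _ = vOp v d A * vOp v d B * vVec v d x := by ring

lemma vOp_one (hd : 1 ≤ d) : vOp v d (1 : Matrix (Fin d) (Fin d) L) = 1 := by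
  have : Nonempty (Fin d) := ⟨⟨0, hd⟩⟩
  apply le_antisymm
  · refine csInf_le ⟨0, fun _ hc => hc.1⟩ ⟨zero_le_one, fun x => ?_⟩
    rw [Matrix.one_mulVec, one_mul]
  · refine le_csInf ⟨_, by positivity [v.nonneg], vVec_mulVec_le v 1⟩ fun c hc => ?_
    simpa [vVec, range_const, Matrix.one_mulVec] using hc.2 fun _ => 1

end AbsoluteValueNorm

lemma copNorm_nonneg (d : ℕ) (A : Matrix (Fin d) (Fin d) ℂ) : 0 ≤ copNorm d A :=
  norm_nonneg _

lemma copNorm_one {d : ℕ} (hd : 1 ≤ d) : copNorm d 1 = 1 := by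
  have : Nonempty (Fin d) := ⟨⟨0, hd⟩⟩
  rw [copNorm, map_one, norm_one]

lemma copNorm_mul (d : ℕ) (A B : Matrix (Fin d) (Fin d) ℂ) :
    copNorm d (A * B) ≤ copNorm d A * copNorm d B := by
  rw [copNorm, map_mul]
  exact norm_mul_le _ _

theorem spectral_radius_eq_lim_min_norms (d : ℕ) (hd : 1 ≤ d) :
    (∀ Q : Set (Matrix (Fin d) (Fin d) ℂ), cBounded d Q →
      (1 : Matrix (Fin d) (Fin d) ℂ) ∈ Q →
      Tendsto (fun n : ℕ => cE d (Q ^ n) ^ ((n : ℝ)⁻¹)) atTop (nhds (cR d Q)) ∧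
        cR d Q = sInf { x : ℝ | ∃ n : ℕ, 0 < n ∧ x = cE d (Q ^ n) ^ ((n : ℝ)⁻¹) }) ∧
    (∀ (p : ℕ) [Fact p.Prime]
      (k : Type) [Field k] [Algebra ℚ_[p] k] [FiniteDimensional ℚ_[p] k]
      (v : AbsoluteValue (AlgebraicClosure k) ℝ),
      (∀ x : ℚ_[p], v (algebraMap k (AlgebraicClosure k) (algebraMap ℚ_[p] k x)) = ‖x‖) →
      ∀ Q : Set (Matrix (Fin d) (Fin d) k),
        (∃ C : ℝ, ∀ A ∈ Q, vOp v d (A.map ⇑(algebraMap k (AlgebraicClosure k))) ≤ C) →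
        (1 : Matrix (Fin d) (Fin d) k) ∈ Q →
        Tendsto
            (fun n : ℕ =>
              vE v d (((fun A => A.map ⇑(algebraMap k (AlgebraicClosure k))) '' Q) ^ n)
                ^ ((n : ℝ)⁻¹))
            atTop
            (nhds (vR v d ((fun A => A.map ⇑(algebraMap k (AlgebraicClosure k))) '' Q))) ∧
          vR v d ((fun A => A.map ⇑(algebraMap k (AlgebraicClosure k))) '' Q) =
            sInf { x : ℝ | ∃ n : ℕ, 0 < n ∧
              x = vE v d (((fun A => A.map ⇑(algebraMap k (AlgebraicClosure k))) '' Q) ^ n)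
                ^ ((n : ℝ)⁻¹) }) := by
  refine ⟨fun Q ⟨C, hC⟩ h1Q => ?_, fun p _ k _ _ _ v _ Q ⟨C, hC⟩ h1Q => ?_⟩
  · exact tendsto_minConjNorm_pow (copNorm_nonneg d) (copNorm_one hd) (copNorm_mul d)
      ⟨C, forall_mem_image.2 hC⟩ h1Q
  · exact tendsto_minConjNorm_pow (vOp_nonneg v) (vOp_one v hd) (vOp_mul v)
      ⟨C, forall_mem_image.2 (forall_mem_image.2 hC)⟩
      ⟨1, h1Q, Matrix.map_one _ (map_zero _) (map_one _)⟩
end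
end

section
/- Let k be a non-archimedean local field of characteristic 0 and let Q be a bounded subset of M_d(k) containing the identity. Then R_k(Q) = E_k(Q), i.e. the spectral radius of Q equals its minimal norm. -/
/-!
STATEMENT 10.  Let `k` be a non-archimedean local field of characteristic 0 (a finite
extension of some `ℚ_p`, with `v` the unique absolute value on an algebraic closure of
`k` extending the `p`-adic one, supplied as data with the extension property) and `Q` a
bounded subset of `M_d(k)` containing the identity.  Then `R_k(Q) = E_k(Q)`.
-/

open Filter
open scoped Pointwise

noncomputable section

/-
`‖Q^n‖` is submultiplicative in `n`, so by Fekete's lemma `‖Q^n‖^(1/n)` converges to some `ρ`.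
Conjugation changes `‖Q^n‖` by a bounded factor only, hence `ρ ≤ ‖x Q x⁻¹‖` for every `x`.
Conversely, for `r > ρ` the orbit norm `N u = sup_{n, g ∈ Q^n} ‖g u‖ / r^n` is an ultrametric
norm on `L^d` dominating the sup norm, for which every element of `Q` has operator norm at most
`r`. Over an algebraically closed nonarchimedean field, such a norm is, up to a factor
`t^(d+1)` with `t > 1` arbitrary, the sup norm of the coordinates in a suitable basis: take an
almost orthogonal basis and rescale its vectors to norm nearly one, which is possible because
the value group is dense. Conjugating by this change of basis gives `‖x Q x⁻¹‖ ≤ t^(d+1) r`,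
and letting `t → 1`, `r → ρ` yields `E(Q) ≤ ρ`.
-/

open Topology Matrix

theorem exists_tendsto_rpow_inv_of_submultiplicative {a : ℕ → ℝ} (h1 : ∀ n, 1 ≤ a n)
    (hmul : ∀ m n, a (m + n) ≤ a m * a n) :
    ∃ ρ, Tendsto (fun n : ℕ => a n ^ (n : ℝ)⁻¹) atTop (𝓝 ρ) := by
  have hpos n : 0 < a n := one_pos.trans_le (h1 n)
  have hsub : Subadditive fun n => Real.log (a n) := fun m n => by
    rw [← Real.log_mul (hpos m).ne' (hpos n).ne']
    exact Real.log_le_log (hpos _) (hmul m n)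
  have hbdd : BddBelow (Set.range fun n => Real.log (a n) / n) := by
    refine ⟨0, ?_⟩
    rintro _ ⟨n, rfl⟩
    exact div_nonneg (Real.log_nonneg (h1 n)) n.cast_nonneg
  refine ⟨Real.exp hsub.lim,
    ((Real.continuous_exp.tendsto _).comp (hsub.tendsto_lim hbdd)).congr fun n => ?_⟩
  simp [Real.rpow_def_of_pos (hpos n), div_eq_mul_inv]

theorem le_of_tendsto_rpow_inv_of_le_mul_pow {a : ℕ → ℝ} {ρ K b : ℝ}
    (hρ : Tendsto (fun n : ℕ => a n ^ (n : ℝ)⁻¹) atTop (𝓝 ρ)) (ha : ∀ n, 0 ≤ a n) (hK : 0 < K)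
    (hb : 0 ≤ b) (hab : ∀ n, a n ≤ K * b ^ n) : ρ ≤ b := by
  have hlim : Tendsto (fun n : ℕ => K ^ (n : ℝ)⁻¹ * b) atTop (𝓝 b) := by
    simpa using (tendsto_const_nhds.rpow tendsto_inv_atTop_nhds_zero_nat
      (Or.inl hK.ne')).mul_const b
  refine le_of_tendsto_of_tendsto hρ hlim ((eventually_ne_atTop 0).mono fun n hn => ?_)
  calc a n ^ (n : ℝ)⁻¹ ≤ (K * b ^ n) ^ (n : ℝ)⁻¹ :=
        Real.rpow_le_rpow (ha n) (hab n) (by positivity)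
    _ = K ^ (n : ℝ)⁻¹ * b := by
        rw [Real.mul_rpow hK.le (by positivity), Real.pow_rpow_inv_natCast hb hn]

lemma exists_le_mul_pow_of_tendsto_rpow_inv {a : ℕ → ℝ} {ρ r : ℝ} (ha : ∀ n, 0 ≤ a n)
    (hρ : Tendsto (fun n : ℕ => a n ^ (n : ℝ)⁻¹) atTop (𝓝 ρ)) (hr : ρ < r) :
    ∃ C, ∀ n, a n ≤ C * r ^ n := by
  have hr0 : 0 < r := (ge_of_tendsto' hρ fun n => Real.rpow_nonneg (ha n) _).trans_lt hr
  obtain ⟨N, hN⟩ :=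
    eventually_atTop.1 ((hρ.eventually (gt_mem_nhds hr)).and (eventually_ge_atTop 1))
  have hsum : 0 ≤ ∑ n ∈ Finset.range N, a n / r ^ n :=
    Finset.sum_nonneg fun n _ => div_nonneg (ha n) (by positivity)
  refine ⟨∑ n ∈ Finset.range N, a n / r ^ n + 1, fun n => ?_⟩
  rw [← div_le_iff₀ (by positivity)]
  rcases lt_or_ge n N with hn | hn
  · exact (Finset.single_le_sum (fun i _ => div_nonneg (ha i) (by positivity))
      (Finset.mem_range.2 hn)).trans (le_add_of_nonneg_right zero_le_one)
  · obtain ⟨hlt, hn1⟩ := hN n hn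
    have han : a n < r ^ n := by
      rw [← Real.rpow_inv_natCast_pow (ha n) (by omega : n ≠ 0)]
      exact pow_lt_pow_left₀ hlt (Real.rpow_nonneg (ha n) _) (by omega)
    have : a n / r ^ n ≤ 1 := (div_le_one (by positivity)).2 han.le
    linarith

section NormedRing

variable {A : Type*} [NormedRing A] {S T : Set A}

def normSup (S : Set A) : ℝ := sSup (norm '' S)

lemma norm_le_normSup (hS : BddAbove (norm '' S)) {a : A} (ha : a ∈ S) : ‖a‖ ≤ normSup S :=
  le_csSup hS ⟨a, ha, rfl⟩

lemma normSup_nonneg (S : Set A) : 0 ≤ normSup S :=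
  Real.sSup_nonneg (by rintro _ ⟨a, -, rfl⟩; exact norm_nonneg a)

lemma normSup_le {C : ℝ} (hC : 0 ≤ C) (h : ∀ a ∈ S, ‖a‖ ≤ C) : normSup S ≤ C :=
  Real.sSup_le (by rintro _ ⟨a, ha, rfl⟩; exact h a ha) hC

lemma norm_mul_le_normSup_mul (hS : BddAbove (norm '' S)) (hT : BddAbove (norm '' T))
    {a b : A} (ha : a ∈ S) (hb : b ∈ T) : ‖a * b‖ ≤ normSup S * normSup T :=
  (norm_mul_le a b).trans <|
    mul_le_mul (norm_le_normSup hS ha) (norm_le_normSup hT hb) (norm_nonneg b) (normSup_nonneg S)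

lemma bddAbove_norm_mul (hS : BddAbove (norm '' S)) (hT : BddAbove (norm '' T)) :
    BddAbove (norm '' (S * T)) := by
  refine ⟨normSup S * normSup T, ?_⟩
  rintro _ ⟨_, ⟨a, ha, b, hb, rfl⟩, rfl⟩
  exact norm_mul_le_normSup_mul hS hT ha hb

lemma normSup_mul_le (hS : BddAbove (norm '' S)) (hT : BddAbove (norm '' T)) :
    normSup (S * T) ≤ normSup S * normSup T := by
  refine normSup_le (mul_nonneg (normSup_nonneg S) (normSup_nonneg T)) ?_
  rintro _ ⟨a, ha, b, hb, rfl⟩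
  exact norm_mul_le_normSup_mul hS hT ha hb

lemma bddAbove_norm_pow (hS : BddAbove (norm '' S)) : ∀ n : ℕ, BddAbove (norm '' (S ^ n))
  | 0 => by rw [pow_zero]; exact (Set.finite_one.image _).bddAbove
  | n + 1 => by rw [pow_succ]; exact bddAbove_norm_mul (bddAbove_norm_pow hS n) hS

lemma norm_conj_le (u : Aˣ) (a : A) : ‖↑u * a * ↑u⁻¹‖ ≤ ‖(u : A)‖ * ‖(↑u⁻¹ : A)‖ * ‖a‖ := by
  calc ‖↑u * a * ↑u⁻¹‖ ≤ ‖(u : A)‖ * ‖a‖ * ‖(↑u⁻¹ : A)‖ := norm_mul₃_le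
    _ = _ := by ring

lemma bddAbove_norm_conj (hS : BddAbove (norm '' S)) (u : Aˣ) :
    BddAbove (norm '' ((fun a => (u : A) * a * ↑u⁻¹) '' S)) := by
  obtain ⟨C, hC⟩ := hS
  refine ⟨‖(u : A)‖ * ‖(↑u⁻¹ : A)‖ * C, ?_⟩
  rintro _ ⟨_, ⟨a, ha, rfl⟩, rfl⟩
  exact (norm_conj_le u a).trans (by gcongr; exact hC ⟨a, ha, rfl⟩)

lemma conj_mem_pow (u : Aˣ) {n : ℕ} {a : A} (ha : a ∈ S ^ n) :
    ↑u * a * ↑u⁻¹ ∈ ((fun a => (u : A) * a * ↑u⁻¹) '' S) ^ n := by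
  induction n generalizing a with
  | zero =>
    rw [pow_zero, Set.mem_one] at ha ⊢
    simp [ha]
  | succ n ih =>
    rw [pow_succ] at ha ⊢
    obtain ⟨b, hb, c, hc, rfl⟩ := ha
    exact ⟨_, ih hb, _, ⟨c, hc, rfl⟩, by simp [mul_assoc]⟩

variable [NormOneClass A]

lemma one_le_normSup (hS : BddAbove (norm '' S)) (h1 : 1 ∈ S) : 1 ≤ normSup S :=
  norm_one (α := A) ▸ norm_le_normSup hS h1

lemma normSup_pow_le (hS : BddAbove (norm '' S)) : ∀ n : ℕ, normSup (S ^ n) ≤ normSup S ^ n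
  | 0 => by simp [normSup]
  | n + 1 => by
    rw [pow_succ, pow_succ]
    exact (normSup_mul_le (bddAbove_norm_pow hS n) hS).trans
      (mul_le_mul_of_nonneg_right (normSup_pow_le hS n) (normSup_nonneg S))

lemma one_le_of_tendsto_normSup_pow (hS : BddAbove (norm '' S)) (h1 : 1 ∈ S) {ρ : ℝ}
    (hρ : Tendsto (fun n : ℕ => normSup (S ^ n) ^ (n : ℝ)⁻¹) atTop (𝓝 ρ)) : 1 ≤ ρ :=
  ge_of_tendsto' hρ fun n => Real.one_le_rpow
    (one_le_normSup (bddAbove_norm_pow hS n) (Set.one_mem_pow h1)) (by positivity)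

theorem exists_tendsto_normSup_pow (hS : BddAbove (norm '' S)) (h1 : 1 ∈ S) :
    ∃ ρ, Tendsto (fun n : ℕ => normSup (S ^ n) ^ (n : ℝ)⁻¹) atTop (𝓝 ρ) :=
  exists_tendsto_rpow_inv_of_submultiplicative
    (fun n => one_le_normSup (bddAbove_norm_pow hS n) (Set.one_mem_pow h1))
    (fun m n => pow_add S m n ▸ normSup_mul_le (bddAbove_norm_pow hS m) (bddAbove_norm_pow hS n))

lemma normSup_pow_le_conj (hS : BddAbove (norm '' S)) (u : Aˣ) (n : ℕ) :
    normSup (S ^ n) ≤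
      ‖(↑u⁻¹ : A)‖ * ‖(u : A)‖ * normSup ((fun a => (u : A) * a * ↑u⁻¹) '' S) ^ n := by
  set T := (fun a => (u : A) * a * ↑u⁻¹) '' S
  have hT : BddAbove (norm '' T) := bddAbove_norm_conj hS u
  refine normSup_le (by have := normSup_nonneg T; positivity) fun a ha => ?_
  calc ‖a‖ = ‖↑u⁻¹ * ((u : A) * a * ↑u⁻¹) * ↑u‖ := by simp [mul_assoc]
    _ ≤ ‖(↑u⁻¹ : A)‖ * ‖(u : A) * a * ↑u⁻¹‖ * ‖(u : A)‖ := norm_mul₃_le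
    _ ≤ ‖(↑u⁻¹ : A)‖ * normSup (T ^ n) * ‖(u : A)‖ := by
        gcongr
        exact norm_le_normSup (bddAbove_norm_pow hT n) (conj_mem_pow u ha)
    _ ≤ ‖(↑u⁻¹ : A)‖ * normSup T ^ n * ‖(u : A)‖ := by
        gcongr
        exact normSup_pow_le hT n
    _ = _ := by ring

theorem le_normSup_conj_of_tendsto (hS : BddAbove (norm '' S)) {ρ : ℝ}
    (hρ : Tendsto (fun n : ℕ => normSup (S ^ n) ^ (n : ℝ)⁻¹) atTop (𝓝 ρ)) (u : Aˣ) :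
    ρ ≤ normSup ((fun a => (u : A) * a * ↑u⁻¹) '' S) :=
  le_of_tendsto_rpow_inv_of_le_mul_pow hρ (fun _ => normSup_nonneg _)
    (one_pos.trans_le (by simpa using norm_mul_le (↑u⁻¹ : A) u)) (normSup_nonneg _)
    (normSup_pow_le_conj hS u)

end NormedRing

section Matrix

variable {L : Type*} [NontriviallyNormedField L] {ι : Type*} [Fintype ι] [DecidableEq ι]

def Matrix.toCLM : Matrix ι ι L →+* ((ι → L) →L[L] (ι → L)) where
  toFun A := ⟨Matrix.toLin' A, LinearMap.continuous_on_pi _⟩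
  map_one' := by ext; simp
  map_mul' _ _ := by ext; simp [Matrix.mulVec_mulVec]
  map_zero' := by ext; simp
  map_add' _ _ := by ext; simp

lemma Matrix.toCLM_injective : Function.Injective (Matrix.toCLM : Matrix ι ι L → _) :=
  fun _ _ h => Matrix.toLin'.injective (LinearMap.ext fun u => congr($h u))

abbrev Matrix.opNormedRing : NormedRing (Matrix ι ι L) :=
  NormedRing.induced _ _ Matrix.toCLM Matrix.toCLM_injective

attribute [local instance] Matrix.opNormedRing

lemma Matrix.opNorm_def (A : Matrix ι ι L) : ‖A‖ = ‖Matrix.toCLM A‖ := rfl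

lemma Matrix.norm_mulVec_le (A : Matrix ι ι L) (u : ι → L) : ‖A *ᵥ u‖ ≤ ‖A‖ * ‖u‖ :=
  (Matrix.toCLM A).le_opNorm u

lemma Matrix.opNorm_le_of_forall {A : Matrix ι ι L} {c : ℝ} (hc : 0 ≤ c)
    (h : ∀ u, ‖A *ᵥ u‖ ≤ c * ‖u‖) : ‖A‖ ≤ c :=
  (Matrix.toCLM A).opNorm_le_bound hc h

theorem Matrix.opNormOneClass [Nonempty ι] : NormOneClass (Matrix ι ι L) :=
  ⟨by rw [Matrix.opNorm_def, map_one, norm_one]⟩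

variable {v : AbsoluteValue L ℝ} (hv : ∀ a, v a = ‖a‖) {d : ℕ}
include hv

lemma vVec_eq_norm (x : Fin d → L) : vVec v d x = ‖x‖ := by
  simp only [vVec, hv]
  refine le_antisymm (Real.sSup_le ?_ (norm_nonneg x)) ?_
  · rintro _ ⟨i, rfl⟩
    exact norm_le_pi_norm x i
  · refine (pi_norm_le_iff_of_nonneg (Real.sSup_nonneg ?_)).2 fun i => ?_
    · rintro _ ⟨i, rfl⟩
      exact norm_nonneg _
    · exact le_csSup (Set.finite_range _).bddAbove ⟨i, rfl⟩

lemma vOp_eq_norm (A : Matrix (Fin d) (Fin d) L) : vOp v d A = ‖A‖ := by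
  simp only [vOp, vVec_eq_norm hv]
  exact (ContinuousLinearMap.norm_def (Matrix.toCLM A)).symm

lemma vNorm_eq_normSup (S : Set (Matrix (Fin d) (Fin d) L)) : vNorm v d S = normSup S := by
  rw [vNorm, normSup, funext (vOp_eq_norm hv)]

end Matrix

lemma exists_norm_mem_Ioo_of_isAlgClosed {L : Type*} [NontriviallyNormedField L] [IsAlgClosed L]
    {r s : ℝ} (hr : 0 < r) (hrs : r < s) : ∃ a : L, r < ‖a‖ ∧ ‖a‖ < s := by
  obtain ⟨π, hπ0, hπ1⟩ := NormedField.exists_norm_lt_one L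
  have hpow (q : ℚ) : ∃ z : L, ‖z‖ = ‖π‖ ^ (q : ℝ) := by
    obtain ⟨z, hz⟩ := IsAlgClosed.exists_pow_nat_eq (π ^ q.num) q.den_pos
    refine ⟨z, ?_⟩
    have hzq : ‖z‖ ^ q.den = ‖π‖ ^ q.num := by rw [← norm_pow, hz, norm_zpow]
    rw [← Real.pow_rpow_inv_natCast (norm_nonneg z) q.den_ne_zero, hzq, ← Real.rpow_intCast,
      ← Real.rpow_mul hπ0.le, Rat.cast_def, div_eq_mul_inv]
  obtain ⟨q, hsq, hqr⟩ := exists_rat_btwn (Real.logb_lt_logb_of_base_lt_one hπ0 hπ1 hr hrs)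
  obtain ⟨z, hz⟩ := hpow q
  refine ⟨z, ?_, ?_⟩
  · rwa [hz, ← Real.rpow_logb hπ0 hπ1.ne hr, Real.rpow_lt_rpow_left_iff_of_base_lt_one hπ0 hπ1]
  · rwa [hz, ← Real.rpow_logb hπ0 hπ1.ne (hr.trans hrs),
      Real.rpow_lt_rpow_left_iff_of_base_lt_one hπ0 hπ1]

section AlmostOrthogonal

variable {L E : Type*} [NormedField L] [AddCommGroup E] [Module L E]

def IsAlmostOrthogonal {ι : Type*} [Fintype ι] (p : Seminorm L E) (s : ℝ) (e : ι → E) : Prop :=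
  ∀ (c : ι → L) (i : ι), ‖c i‖ * p (e i) ≤ s * p (∑ j, c j • e j)

variable {p : Seminorm L E} {s : ℝ}

lemma IsAlmostOrthogonal.smul {ι : Type*} [Fintype ι] {e : ι → E} (he : IsAlmostOrthogonal p s e)
    (α : ι → L) : IsAlmostOrthogonal p s fun i => α i • e i := by
  intro c i
  simpa [map_smul_eq_mul, smul_smul, mul_assoc] using he (fun j => c j * α j) i

lemma IsAlmostOrthogonal.comp_equiv {ι ι' : Type*} [Fintype ι] [Fintype ι'] {e : ι → E}
    (he : IsAlmostOrthogonal p s e) (σ : ι' ≃ ι) : IsAlmostOrthogonal p s (e ∘ σ) := by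
  intro c i
  have hsum : ∑ j, c j • e (σ j) = ∑ j, c (σ.symm j) • e j := by
    rw [← σ.sum_comp]
    simp
  simpa [hsum] using he (c ∘ σ.symm) (σ i)

theorem IsAlmostOrthogonal.snoc (hp : IsNonarchimedean p) {m : ℕ} {e : Fin m → E}
    (he : IsAlmostOrthogonal p s e) (hs : 1 ≤ s) {t : ℝ} (ht : 1 ≤ t) {e' : E}
    (he' : ∀ w ∈ Submodule.span L (Set.range e), p e' ≤ t * p (e' + w)) :
    IsAlmostOrthogonal p (s * t) (Fin.snoc e e') := by
  intro c i
  set a := c (Fin.last m)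
  set z := ∑ j : Fin m, c j.castSucc • e j
  have hz : z ∈ Submodule.span L (Set.range e) :=
    Submodule.sum_mem _ fun j _ => Submodule.smul_mem _ _ (Submodule.subset_span ⟨j, rfl⟩)
  have hsum : ∑ j, c j • Fin.snoc e e' j = a • e' + z := by
    rw [Fin.sum_univ_castSucc, add_comm]
    simp [z, a]
  rw [hsum]
  have hlast : ‖a‖ * p e' ≤ t * p (a • e' + z) := by
    rcases eq_or_ne a 0 with ha | ha
    · rw [ha, norm_zero, zero_mul]
      exact mul_nonneg (by linarith) (apply_nonneg p _)
    · calc ‖a‖ * p e' ≤ ‖a‖ * (t * p (e' + a⁻¹ • z)) :=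
            mul_le_mul_of_nonneg_left (he' _ (Submodule.smul_mem _ _ hz)) (norm_nonneg a)
        _ = t * p (a • e' + z) := by
            rw [← mul_assoc, mul_comm ‖a‖, mul_assoc, ← map_smul_eq_mul, smul_add, smul_smul,
              mul_inv_cancel₀ ha, one_smul]
  have hz_le : p z ≤ t * p (a • e' + z) := by
    calc p z = p (a • e' + z + (-a) • e') := by congr 1; simp [neg_smul]
      _ ≤ max (p (a • e' + z)) (‖a‖ * p e') := by
          simpa [map_smul_eq_mul] using hp (a • e' + z) ((-a) • e')
      _ ≤ t * p (a • e' + z) := max_le (le_mul_of_one_le_left (apply_nonneg p _) ht) hlast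
  refine Fin.lastCases ?_ (fun j => ?_) i
  · rw [Fin.snoc_last]
    exact hlast.trans (mul_le_mul_of_nonneg_right (le_mul_of_one_le_left (by linarith) hs)
      (apply_nonneg p _))
  · rw [Fin.snoc_castSucc]
    calc ‖c j.castSucc‖ * p (e j) ≤ s * p z := he (fun j => c j.castSucc) j
      _ ≤ s * (t * p (a • e' + z)) := mul_le_mul_of_nonneg_left hz_le (by linarith)
      _ = s * t * p (a • e' + z) := by ring

end AlmostOrthogonal

section AlmostOrthogonalBasis

variable {L : Type*} [NontriviallyNormedField L] {ι : Type*} [Fintype ι]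
  {p : Seminorm L (ι → L)} (hp : ∀ u, ‖u‖ ≤ p u)
include hp

lemma exists_pos_le_seminorm_sub {W : Submodule L (ι → L)} {u : ι → L} (hu : u ∉ W) :
    ∃ δ > 0, ∀ w ∈ W, δ ≤ p (u - w) := by
  -- `L` need not be complete, so `W` need not be closed: the lower bound comes from a
  -- (automatically continuous) functional vanishing on `W` but not at `u`.
  obtain ⟨f, hfu, hfW⟩ := W.exists_dual_map_eq_bot_of_notMem hu inferInstance
  let F : (ι → L) →L[L] L := ⟨f, LinearMap.continuous_on_pi f⟩
  refine ⟨‖f u‖ / (‖F‖ + 1), by positivity, fun w hw => ?_⟩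
  have hfw : f w = 0 := by simpa [hfW] using Submodule.mem_map_of_mem (f := f) hw
  rw [div_le_iff₀ (by positivity)]
  calc ‖f u‖ = ‖F (u - w)‖ := by simp [F, hfw]
    _ ≤ ‖F‖ * ‖u - w‖ := F.le_opNorm _
    _ ≤ p (u - w) * (‖F‖ + 1) := by
        rw [mul_comm]
        exact mul_le_mul (hp _) (by linarith) (norm_nonneg _) (apply_nonneg p _)

lemma exists_notMem_forall_seminorm_le {W : Submodule L (ι → L)} (hW : W ≠ ⊤) {t : ℝ}
    (ht : 1 < t) : ∃ e ∉ W, ∀ w ∈ W, p e ≤ t * p (e + w) := by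
  obtain ⟨u, hu⟩ := SetLike.exists_not_mem_of_ne_top W hW
  obtain ⟨δ, hδ, hδW⟩ := exists_pos_le_seminorm_sub hp hu
  have hne : ((fun w => p (u - w)) '' W).Nonempty := ⟨_, 0, W.zero_mem, rfl⟩
  have hbdd : BddBelow ((fun w => p (u - w)) '' W) := ⟨0, by
    rintro _ ⟨w, -, rfl⟩
    exact apply_nonneg p _⟩
  set D := sInf ((fun w => p (u - w)) '' W)
  have hD : 0 < D := hδ.trans_le (le_csInf hne (by rintro _ ⟨w, hw, rfl⟩; exact hδW w hw))
  obtain ⟨_, ⟨w₀, hw₀, rfl⟩, hlt⟩ := exists_lt_of_csInf_lt hne (lt_mul_of_one_lt_left hD ht)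
  refine ⟨u - w₀, fun h => hu (by simpa using W.add_mem h hw₀), fun w hw => ?_⟩
  calc p (u - w₀) ≤ t * D := hlt.le
    _ ≤ t * p (u - w₀ + w) := by
        have hmem : p (u - w₀ + w) ∈ (fun w => p (u - w)) '' W :=
          ⟨w₀ - w, W.sub_mem hw₀ hw, by simp only [sub_sub_eq_add_sub, add_sub_right_comm]⟩
        exact mul_le_mul_of_nonneg_left (csInf_le hbdd hmem) (by linarith)

theorem exists_linearIndependent_isAlmostOrthogonal (hna : IsNonarchimedean p) {t : ℝ}
    (ht : 1 < t) : ∀ m ≤ Fintype.card ι,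
      ∃ e : Fin m → ι → L, LinearIndependent L e ∧ IsAlmostOrthogonal p (t ^ m) e
  | 0, _ => ⟨Fin.elim0, linearIndependent_empty_type, fun _ i => i.elim0⟩
  | m + 1, hm => by
    obtain ⟨e, he, hae⟩ := exists_linearIndependent_isAlmostOrthogonal hna ht m (by omega)
    have hW : Submodule.span L (Set.range e) ≠ ⊤ := by
      intro htop
      have := finrank_span_eq_card he
      rw [htop, finrank_top, Module.finrank_fintype_fun_eq_card, Fintype.card_fin] at this
      omega
    obtain ⟨e', he'W, he'⟩ := exists_notMem_forall_seminorm_le hp hW ht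
    exact ⟨Fin.snoc e e', linearIndependent_finSnoc.2 ⟨he, he'W⟩,
      pow_succ t m ▸ hae.snoc hna (one_le_pow₀ ht.le) ht.le he'⟩

end AlmostOrthogonalBasis

section Basis

variable {L E ι : Type*} [NormedField L] [AddCommGroup E] [Module L E] [Fintype ι]
  {p : Seminorm L E} (b : Module.Basis ι L E)

lemma seminorm_le_norm_equivFun [Nonempty ι] (hna : IsNonarchimedean p) (hb : ∀ i, p (b i) ≤ 1)
    (u : E) : p u ≤ ‖b.equivFun u‖ := by
  set c := b.equivFun u
  obtain ⟨i, -, hi⟩ :=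
    hna.finset_image_add (map_zero p) (apply_nonneg p) (fun i => c i • b i) Finset.univ
  calc p u = p (∑ i, c i • b i) := by rw [b.sum_equivFun]
    _ ≤ ‖c i‖ * p (b i) := hi.trans_eq (map_smul_eq_mul p _ _)
    _ ≤ ‖c i‖ := mul_le_of_le_one_right (norm_nonneg _) (hb i)
    _ ≤ ‖c‖ := norm_le_pi_norm c i

lemma norm_equivFun_le {s t : ℝ} (hb : IsAlmostOrthogonal p s b) (hs : 0 ≤ s) (ht : 0 ≤ t)
    (hbt : ∀ i, 1 ≤ t * p (b i)) (u : E) : ‖b.equivFun u‖ ≤ t * s * p u := by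
  set c := b.equivFun u
  refine (pi_norm_le_iff_of_nonneg (by positivity)).2 fun i => ?_
  calc ‖c i‖ ≤ ‖c i‖ * (t * p (b i)) := le_mul_of_one_le_right (norm_nonneg _) (hbt i)
    _ = t * (‖c i‖ * p (b i)) := by ring
    _ ≤ t * (s * p (∑ j, c j • b j)) := mul_le_mul_of_nonneg_left (hb c i) ht
    _ = t * s * p u := by rw [b.sum_equivFun, mul_assoc]

end Basis

theorem exists_linearEquiv_seminorm_le_norm {L ι : Type*} [NontriviallyNormedField L]
    [IsAlgClosed L] [Fintype ι] [Nonempty ι] {p : Seminorm L (ι → L)} (hp : ∀ u, ‖u‖ ≤ p u)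
    (hna : IsNonarchimedean p) {t : ℝ} (ht : 1 < t) :
    ∃ Φ : (ι → L) ≃ₗ[L] (ι → L),
      ∀ u, p u ≤ ‖Φ u‖ ∧ ‖Φ u‖ ≤ t ^ (Fintype.card ι + 1) * p u := by
  obtain ⟨e, he, hae⟩ := exists_linearIndependent_isAlmostOrthogonal hp hna ht _ le_rfl
  have hpos i : 0 < p (e i) := (norm_pos_iff.2 (he.ne_zero i)).trans_le (hp _)
  choose α hα using fun i =>
    exists_norm_mem_Ioo_of_isAlgClosed (L := L) (hpos i) (lt_mul_of_one_lt_left (hpos i) ht)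
  have hα0 i : 0 < ‖α i‖ := (hpos i).trans (hα i).1
  -- rescaled by `α`, the basis vectors satisfy `t⁻¹ < p (b i) < 1`
  let σ := (Fintype.equivFin ι).symm
  let b := ((basisOfLinearIndependentOfCardEqFinrank' e he (by simp)).unitsSMul
    fun i => (Units.mk0 (α i) (norm_pos_iff.1 (hα0 i)))⁻¹).reindex σ
  have hb i : b i = (α (σ.symm i))⁻¹ • e (σ.symm i) := by
    simp [b, Module.Basis.unitsSMul_apply, Units.smul_def]
  have hpb i : p (b i) = p (e (σ.symm i)) / ‖α (σ.symm i)‖ := by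
    rw [hb, map_smul_eq_mul, norm_inv, inv_mul_eq_div]
  have hab : IsAlmostOrthogonal p (t ^ Fintype.card ι) b := by
    have := (hae.smul fun i => (α i)⁻¹).comp_equiv σ.symm
    convert this using 1
    funext i
    exact hb i
  refine ⟨b.equivFun, fun u => ⟨seminorm_le_norm_equivFun b hna (fun i => ?_) u, ?_⟩⟩
  · rw [hpb, div_le_one (hα0 _)]
    exact (hα _).1.le
  · rw [pow_succ']
    refine norm_equivFun_le b hab (by positivity) (by positivity) (fun i => ?_) u
    rw [hpb, mul_div_assoc', le_div_iff₀ (hα0 _), one_mul]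
    exact (hα _).2.le

section OrbitNorm

variable {L : Type*} [NontriviallyNormedField L] {ι : Type*} [Fintype ι] [DecidableEq ι]

attribute [local instance] Matrix.opNormedRing

def orbitNorm (S : Set (Matrix ι ι L)) (r : ℝ) (u : ι → L) : ℝ :=
  ⨆ x : Σ n : ℕ, ↥(S ^ n), ‖(x.2 : Matrix ι ι L) *ᵥ u‖ / r ^ x.1

variable {S : Set (Matrix ι ι L)} {r C : ℝ} (hr : 0 < r)
  (hC : ∀ n : ℕ, ∀ g ∈ S ^ n, ‖g‖ ≤ C * r ^ n)
include hr hC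

lemma bddAbove_orbitNorm (u : ι → L) :
    BddAbove (Set.range fun x : Σ n : ℕ, ↥(S ^ n) => ‖(x.2 : Matrix ι ι L) *ᵥ u‖ / r ^ x.1) := by
  refine ⟨C * ‖u‖, ?_⟩
  rintro _ ⟨⟨n, g, hg⟩, rfl⟩
  rw [div_le_iff₀ (by positivity)]
  calc ‖g *ᵥ u‖ ≤ ‖g‖ * ‖u‖ := Matrix.norm_mulVec_le g u
    _ ≤ C * r ^ n * ‖u‖ := mul_le_mul_of_nonneg_right (hC n g hg) (norm_nonneg u)
    _ = C * ‖u‖ * r ^ n := by ring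

lemma norm_le_orbitNorm (u : ι → L) : ‖u‖ ≤ orbitNorm S r u := by
  refine le_trans ?_ (le_ciSup (bddAbove_orbitNorm hr hC u) ⟨0, 1, by simp⟩)
  simp

omit hC in
lemma orbitNorm_nonneg (u : ι → L) : 0 ≤ orbitNorm S r u :=
  Real.iSup_nonneg fun _ => by positivity

omit hr hC in
lemma orbitNorm_smul (c : L) (u : ι → L) : orbitNorm S r (c • u) = ‖c‖ * orbitNorm S r u := by
  simp only [orbitNorm, Real.mul_iSup_of_nonneg (norm_nonneg c), Matrix.mulVec_smul, norm_smul,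
    mul_div_assoc]

lemma orbitNorm_mulVec_le {g : Matrix ι ι L} (hg : g ∈ S) (u : ι → L) :
    orbitNorm S r (g *ᵥ u) ≤ r * orbitNorm S r u := by
  refine Real.iSup_le (fun ⟨n, h, hh⟩ => ?_) (mul_nonneg hr.le (orbitNorm_nonneg hr u))
  have hhg : h * g ∈ S ^ (n + 1) := by
    rw [pow_succ]
    exact Set.mul_mem_mul hh hg
  calc ‖h *ᵥ (g *ᵥ u)‖ / r ^ n = r * (‖(h * g) *ᵥ u‖ / r ^ (n + 1)) := by
        rw [Matrix.mulVec_mulVec, pow_succ]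
        field_simp
    _ ≤ r * orbitNorm S r u :=
        mul_le_mul_of_nonneg_left (le_ciSup (bddAbove_orbitNorm hr hC u) ⟨n + 1, _, hhg⟩) hr.le

variable [IsUltrametricDist L]

lemma isNonarchimedean_orbitNorm : IsNonarchimedean (orbitNorm S r) := by
  intro u v
  refine Real.iSup_le (fun x => ?_) (le_max_of_le_left (orbitNorm_nonneg hr u))
  calc ‖(x.2 : Matrix ι ι L) *ᵥ (u + v)‖ / r ^ x.1
      ≤ max ‖(x.2 : Matrix ι ι L) *ᵥ u‖ ‖(x.2 : Matrix ι ι L) *ᵥ v‖ / r ^ x.1 := by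
        rw [Matrix.mulVec_add]
        gcongr
        exact IsUltrametricDist.norm_add_le_max _ _
    _ = max (‖(x.2 : Matrix ι ι L) *ᵥ u‖ / r ^ x.1) (‖(x.2 : Matrix ι ι L) *ᵥ v‖ / r ^ x.1) :=
        (max_div_div_right (by positivity) _ _).symm
    _ ≤ max (orbitNorm S r u) (orbitNorm S r v) :=
        max_le_max (le_ciSup (bddAbove_orbitNorm hr hC u) x)
          (le_ciSup (bddAbove_orbitNorm hr hC v) x)

def orbitSeminorm : Seminorm L (ι → L) :=
  Seminorm.of (orbitNorm S r)
    (fun u v => (isNonarchimedean_orbitNorm hr hC u v).trans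
      (max_le_add_of_nonneg (orbitNorm_nonneg hr u) (orbitNorm_nonneg hr v)))
    orbitNorm_smul

end OrbitNorm

section Conjugation

variable {L : Type*} [NontriviallyNormedField L] {ι : Type*} [Fintype ι] [DecidableEq ι]

attribute [local instance] Matrix.opNormedRing

theorem exists_conj_norm_le [IsUltrametricDist L] [IsAlgClosed L] [Nonempty ι]
    {S : Set (Matrix ι ι L)} {r C : ℝ} (hr : 0 < r) (hC : ∀ n : ℕ, ∀ g ∈ S ^ n, ‖g‖ ≤ C * r ^ n)
    {t : ℝ} (ht : 1 < t) :
    ∃ x : (Matrix ι ι L)ˣ, ∀ g ∈ S,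
      ‖(x : Matrix ι ι L) * g * (↑x⁻¹ : Matrix ι ι L)‖ ≤ t ^ (Fintype.card ι + 1) * r := by
  set p := orbitSeminorm hr hC
  obtain ⟨Φ, hΦ⟩ := exists_linearEquiv_seminorm_le_norm (p := p) (norm_le_orbitNorm hr hC)
    (isNonarchimedean_orbitNorm hr hC) ht
  let x : (Matrix ι ι L)ˣ := ⟨LinearMap.toMatrix' Φ, LinearMap.toMatrix' Φ.symm,
    by simp [← LinearMap.toMatrix'_comp], by simp [← LinearMap.toMatrix'_comp]⟩
  refine ⟨x, fun g hg => Matrix.opNorm_le_of_forall (by positivity) fun u => ?_⟩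
  calc ‖(↑x * g * ↑x⁻¹) *ᵥ u‖ = ‖Φ (g *ᵥ Φ.symm u)‖ := by simp [x, ← Matrix.mulVec_mulVec]
    _ ≤ t ^ (Fintype.card ι + 1) * p (g *ᵥ Φ.symm u) := (hΦ _).2
    _ ≤ t ^ (Fintype.card ι + 1) * (r * p (Φ.symm u)) := by
        gcongr
        exact orbitNorm_mulVec_le hr hC hg _
    _ ≤ t ^ (Fintype.card ι + 1) * (r * ‖Φ (Φ.symm u)‖) := by
        gcongr
        exact (hΦ _).1
    _ = t ^ (Fintype.card ι + 1) * r * ‖u‖ := by rw [Φ.apply_symm_apply, mul_assoc]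

variable {v : AbsoluteValue L ℝ} (hv : ∀ a, v a = ‖a‖) {d : ℕ} {S : Set (Matrix (Fin d) (Fin d) L)}
  (hS : BddAbove (norm '' S)) {ρ : ℝ}
  (hρ : Tendsto (fun n : ℕ => normSup (S ^ n) ^ (n : ℝ)⁻¹) atTop (𝓝 ρ))
include hv hS hρ

theorem le_vE_of_tendsto [Nonempty (Fin d)] : ρ ≤ vE v d S := by
  have := Matrix.opNormOneClass (L := L) (ι := Fin d)
  refine le_csInf ⟨_, 1, rfl⟩ ?_
  rintro _ ⟨x, rfl⟩
  rw [vNorm_eq_normSup hv]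
  exact le_normSup_conj_of_tendsto hS hρ x

theorem vE_le_of_tendsto [IsUltrametricDist L] [IsAlgClosed L] [Nonempty (Fin d)] (hρ0 : 0 < ρ) :
    vE v d S ≤ ρ := by
  have hvE : ∀ t > 1, vE v d S ≤ ρ * t ^ (d + 2) := by
    intro t ht
    obtain ⟨C, hC⟩ := exists_le_mul_pow_of_tendsto_rpow_inv (fun n => normSup_nonneg _) hρ
      (lt_mul_of_one_lt_right hρ0 ht)
    obtain ⟨x, hx⟩ := exists_conj_norm_le (by positivity)
      (fun n g hg => (norm_le_normSup (bddAbove_norm_pow hS n) hg).trans (hC n)) ht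
    calc vE v d S ≤ vNorm v d ((fun g => x.val * g * x.inv) '' S) := by
          refine csInf_le ⟨0, ?_⟩ ⟨x, rfl⟩
          rintro _ ⟨y, rfl⟩
          rw [vNorm_eq_normSup hv]
          exact normSup_nonneg _
      _ ≤ t ^ (d + 1) * (ρ * t) := by
          rw [vNorm_eq_normSup hv]
          refine normSup_le (by positivity) ?_
          rintro _ ⟨g, hg, rfl⟩
          simpa using hx g hg
      _ = ρ * t ^ (d + 2) := by ring
  have hlim : Tendsto (fun t : ℝ => ρ * t ^ (d + 2)) (𝓝[>] 1) (𝓝 ρ) := by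
    have hcont : Continuous fun t : ℝ => ρ * t ^ (d + 2) := by fun_prop
    exact (hcont.tendsto' 1 ρ (by simp)).mono_left nhdsWithin_le_nhds
  exact ge_of_tendsto hlim (eventually_nhdsWithin_of_forall hvE)

end Conjugation

theorem vR_eq_vE_of_isNonarchimedean {L : Type*} [Field L] [IsAlgClosed L]
    {v : AbsoluteValue L ℝ} (hna : IsNonarchimedean v) (hv : v.IsNontrivial) {d : ℕ} (hd : 1 ≤ d)
    {S : Set (Matrix (Fin d) (Fin d) L)} (hS : BddAbove (vOp v d '' S)) (h1 : 1 ∈ S) :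
    vR v d S = vE v d S := by
  let := v.toNormedField
  let := NontriviallyNormedField.ofNormNeOne hv
  have := IsUltrametricDist.isUltrametricDist_of_isNonarchimedean_norm hna
  let := Matrix.opNormedRing (L := L) (ι := Fin d)
  have : Nonempty (Fin d) := ⟨⟨0, hd⟩⟩
  have := Matrix.opNormOneClass (L := L) (ι := Fin d)
  have hv' : ∀ a, v a = ‖a‖ := fun _ => rfl
  rw [funext (vOp_eq_norm hv')] at hS
  obtain ⟨ρ, hρ⟩ := exists_tendsto_normSup_pow hS h1
  have hR : vR v d S = ρ := by simpa only [vR, vNorm_eq_normSup hv'] using hρ.limUnder_eq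
  rw [hR]
  exact le_antisymm (le_vE_of_tendsto hv' hS hρ)
    (vE_le_of_tendsto hv' hS hρ (one_pos.trans_le (one_le_of_tendsto_normSup_pow hS h1 hρ)))

theorem nonarch_spectral_radius_eq_min_norm_general (d : ℕ) (hd : 1 ≤ d) (p : ℕ) [Fact p.Prime]
    (k : Type) [Field k] [Algebra ℚ_[p] k]
    (v : AbsoluteValue (AlgebraicClosure k) ℝ)
    (hv : ∀ x : ℚ_[p], v (algebraMap k (AlgebraicClosure k) (algebraMap ℚ_[p] k x)) = ‖x‖)
    (Q : Set (Matrix (Fin d) (Fin d) k))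
    (hQ : ∃ C : ℝ, ∀ A ∈ Q, vOp v d (A.map ⇑(algebraMap k (AlgebraicClosure k))) ≤ C)
    (h1 : (1 : Matrix (Fin d) (Fin d) k) ∈ Q) :
    vR v d ((fun A => A.map ⇑(algebraMap k (AlgebraicClosure k))) '' Q) =
      vE v d ((fun A => A.map ⇑(algebraMap k (AlgebraicClosure k))) '' Q) := by
  have hv_nat (n : ℕ) : v n = ‖(n : ℚ_[p])‖ := by simpa using hv n
  have hna : IsNonarchimedean v := by
    let := v.toNormedField
    exact (IsUltrametricDist.isUltrametricDist_of_forall_norm_natCast_le_one fun n =>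
      (hv_nat n).trans_le (by simpa using Padic.norm_int_le_one (p := p) n)).isNonarchimedean_norm
  have hp : p.Prime := Fact.out
  have hvp : v p = (p : ℝ)⁻¹ := by rw [hv_nat, Padic.norm_p]
  have hnt : v.IsNontrivial := by
    refine ⟨p, fun h => hp.ne_zero ?_, ?_⟩
    · simp only [h, map_zero, zero_eq_inv] at hvp
      exact_mod_cast hvp.symm
    · rw [hvp]
      exact inv_ne_one.2 (by exact_mod_cast hp.one_lt.ne')
  refine vR_eq_vE_of_isNonarchimedean hna hnt hd ?_
    ⟨1, h1, Matrix.map_one _ (map_zero _) (map_one _)⟩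
  obtain ⟨C, hC⟩ := hQ
  exact ⟨C, by rintro _ ⟨_, ⟨A, hA, rfl⟩, rfl⟩; exact hC A hA⟩

theorem nonarch_spectral_radius_eq_min_norm (d : ℕ) (hd : 1 ≤ d) (p : ℕ) [Fact p.Prime]
    (k : Type) [Field k] [Algebra ℚ_[p] k] [FiniteDimensional ℚ_[p] k]
    (v : AbsoluteValue (AlgebraicClosure k) ℝ)
    (hv : ∀ x : ℚ_[p], v (algebraMap k (AlgebraicClosure k) (algebraMap ℚ_[p] k x)) = ‖x‖)
    (Q : Set (Matrix (Fin d) (Fin d) k))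
    (hQ : ∃ C : ℝ, ∀ A ∈ Q, vOp v d (A.map ⇑(algebraMap k (AlgebraicClosure k))) ≤ C)
    (h1 : (1 : Matrix (Fin d) (Fin d) k) ∈ Q) :
    vR v d ((fun A => A.map ⇑(algebraMap k (AlgebraicClosure k))) '' Q) =
      vE v d ((fun A => A.map ⇑(algebraMap k (AlgebraicClosure k))) '' Q) :=
  nonarch_spectral_radius_eq_min_norm_general d hd p k v hv Q hQ h1
end
end

section
/- Let Γ be a group and F a finite subset of Γ containing the identity such that F together with the inverses of its elements generates Γ. Let Γ₀ be a subgroup of index k in Γ. Then F^{2k+1} (the set of products of 2k+1 elements of F) contains a generating set of Γ₀. -/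
/-!
The sets `F ^ n • {x}` in a finite `G`-set increase with `n`, so they stabilise within `|X|`
steps; the stable set is `F`-invariant, hence invariant under the group `F` generates. Thus
`F ^ k` meets every left and every right coset of `Γ₀`. Take a right transversal `R ⊆ F ^ k`
with `1 ∈ R`: by Schreier's lemma `Γ₀` is generated by the elements `r f t⁻¹ ∈ Γ₀` with
`r, t ∈ R` and `f ∈ F`, and choosing `v ∈ F ^ k` with `t v ∈ Γ₀` writes such an element as
`(r f v) (t v)⁻¹`, a quotient of two elements of `Γ₀ ∩ F ^ (2k+1)`.
-/

open scoped Pointwise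

theorem Set.exists_le_card_eq_succ_of_monotone {X : Type*} [Finite X] {D : ℕ → Set X}
    (hD : Monotone D) : ∃ m ≤ Nat.card X, D m = D (m + 1) := by
  by_contra! hne
  have hgrow : ∀ n ≤ Nat.card X + 1, n ≤ (D n).ncard := by
    intro n hn
    induction n with
    | zero => exact Nat.zero_le _
    | succ n ih =>
      have hlt : D n ⊂ D (n + 1) := (hD n.le_succ).ssubset_of_ne (hne n (by omega))
      exact (ih (by omega)).trans_lt (Set.ncard_lt_ncard hlt (Set.toFinite _))
  have := (hgrow _ le_rfl).trans (Set.ncard_le_card _)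
  omega

theorem Subgroup.closure_le_stabilizer_of_smul_subset {G X : Type*} [Group G] [MulAction G X]
    {F : Set G} {s : Set X} (hs : s.Finite) (hFs : ∀ f ∈ F, f • s ⊆ s) :
    Subgroup.closure F ≤ MulAction.stabilizer G s :=
  (Subgroup.closure_le _).2 fun f hf ↦ MulAction.mem_stabilizer_iff.2 <|
    Set.eq_of_subset_of_ncard_le (hFs f hf) (Set.ncard_smul_set f s).ge hs

theorem MulAction.exists_mem_pow_smul_eq {G X : Type*} [Group G] [MulAction G X] [Finite X]
    {F : Set G} (h1 : 1 ∈ F) (hF : Subgroup.closure F = ⊤) (x : X) (g : G) :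
    ∃ a ∈ F ^ Nat.card X, a • x = g • x := by
  set D : ℕ → Set X := fun n ↦ F ^ n • {x}
  have hD : Monotone D := fun m n hmn ↦
    Set.smul_subset_smul_right (Set.pow_subset_pow_right h1 hmn)
  obtain ⟨m, hm, hstable⟩ := Set.exists_le_card_eq_succ_of_monotone hD
  have hinv : g ∈ MulAction.stabilizer G (D m) := by
    refine Subgroup.closure_le_stabilizer_of_smul_subset (Set.toFinite _) (fun f hf ↦ ?_)
      (hF ▸ Subgroup.mem_top g)
    calc f • D m ⊆ F • D m := Set.smul_set_subset_smul hf
      _ = D (m + 1) := by simp only [D, pow_succ', mul_smul]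
      _ = D m := hstable.symm
  have hx : g • x ∈ D m := by
    rw [← MulAction.mem_stabilizer_iff.1 hinv]
    simpa only [one_smul] using
      Set.smul_mem_smul_set (Set.smul_mem_smul (Set.one_mem_pow h1) (Set.mem_singleton x))
  simpa only [D, Set.smul_singleton, Set.mem_image] using hD hm hx

namespace Subgroup

variable {G : Type*} [Group G] {F : Set G}

theorem exists_isComplement_right_subset {H : Subgroup G} {T : Set G} {g : G}
    (hT : ∀ x, ∃ t ∈ T, x * t⁻¹ ∈ H) (hg : g ∈ T) : ∃ R ⊆ T, IsComplement H R ∧ g ∈ R := by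
  classical
  choose f hfT hfH using hT
  set s : Quotient (QuotientGroup.rightRel H) → G :=
    Function.update (fun q ↦ f q.out) (Quotient.mk'' g) g
  refine ⟨Set.range s, Set.range_subset_iff.2 fun q ↦ ?_, isComplement_range_right fun q ↦ ?_,
    Quotient.mk'' g, Function.update_self _ _ _⟩
  · by_cases hq : q = Quotient.mk'' g
    · simpa [s, hq] using hg
    · simpa [s, hq] using hfT _
  · by_cases hq : q = Quotient.mk'' g
    · simp [s, hq]
    · simp only [s, Function.update_of_ne hq]
      conv_rhs => rw [← q.out_eq']
      exact Quotient.sound' (QuotientGroup.rightRel_apply.2 (hfH _))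

variable (H : Subgroup G) [H.FiniteIndex]

theorem exists_mem_pow_index_inv_mul_mem (h1 : 1 ∈ F) (hF : closure F = ⊤) (g : G) :
    ∃ a ∈ F ^ H.index, a⁻¹ * g ∈ H := by
  obtain ⟨a, ha, hag⟩ := MulAction.exists_mem_pow_smul_eq h1 hF ((1 : G) : G ⧸ H) g
  refine ⟨a, H.index_eq_card ▸ ha, QuotientGroup.eq.1 ?_⟩
  simpa [MulAction.Quotient.smul_mk] using hag

theorem exists_mem_pow_index_mul_inv_mem (h1 : 1 ∈ F) (hF : closure F = ⊤) (g : G) :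
    ∃ a ∈ F ^ H.index, g * a⁻¹ ∈ H := by
  obtain ⟨a, ha, hag⟩ := H.exists_mem_pow_index_inv_mul_mem (F := F⁻¹) (by simpa using h1)
    (by rwa [closure_inv]) g⁻¹
  rw [inv_pow, Set.mem_inv] at ha
  exact ⟨a⁻¹, ha, by simpa using H.inv_mem hag⟩

theorem mul_mul_inv_mem_closure_inter_pow (h1 : 1 ∈ F) (hF : closure F = ⊤) {r t f : G}
    (hr : r ∈ F ^ H.index) (ht : t ∈ F ^ H.index) (hf : f ∈ F) (hH : r * f * t⁻¹ ∈ H) :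
    r * f * t⁻¹ ∈ closure (H ∩ F ^ (2 * H.index + 1)) := by
  obtain ⟨v, hv, hvt⟩ := H.exists_mem_pow_index_inv_mul_mem h1 hF t⁻¹
  have htv : t * v ∈ H := by simpa using H.inv_mem hvt
  have hrfv : r * f * v ∈ H := by
    simpa only [show r * f * t⁻¹ * (t * v) = r * f * v by group] using H.mul_mem hH htv
  rw [show r * f * t⁻¹ = r * f * v * (t * v)⁻¹ by group]
  refine mul_mem (subset_closure ⟨hrfv, ?_⟩) (inv_mem (subset_closure ⟨htv, ?_⟩))
  · rw [show 2 * H.index + 1 = H.index + 1 + H.index by ring, pow_add, pow_succ]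
    exact Set.mul_mem_mul (Set.mul_mem_mul hr hf) hv
  · refine Set.pow_subset_pow_right h1 (by omega : H.index + H.index ≤ _) ?_
    rw [pow_add]
    exact Set.mul_mem_mul ht hv

end Subgroup

theorem finite_index_subgroup_generators_general (Γ : Type) [Group Γ] (F : Set Γ)
    (h1 : (1 : Γ) ∈ F) (hgen : Subgroup.closure (F ∪ F⁻¹) = ⊤)
    (Γ₀ : Subgroup Γ) (k : ℕ) (hk : 0 < k) (hidx : Γ₀.index = k) :
    ∃ S : Set Γ, S ⊆ F ^ (2 * k + 1) ∧ Subgroup.closure S = Γ₀ := by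
  subst hidx
  have : Γ₀.FiniteIndex := ⟨hk.ne'⟩
  have hF : Subgroup.closure F = ⊤ := by
    rwa [Subgroup.closure_union, Subgroup.closure_inv, sup_idem] at hgen
  obtain ⟨R, hRF, hR, hR1⟩ := Subgroup.exists_isComplement_right_subset
    (Γ₀.exists_mem_pow_index_mul_inv_mem h1 hF) (Set.one_mem_pow h1)
  refine ⟨Γ₀ ∩ F ^ (2 * Γ₀.index + 1), Set.inter_subset_right,
    le_antisymm ((Subgroup.closure_le _).2 Set.inter_subset_left) ?_⟩
  refine (Subgroup.closure_mul_image_eq hR hR1 hF).ge.trans ((Subgroup.closure_le _).2 ?_)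
  rintro - ⟨-, ⟨r, hr, f, hf, rfl⟩, rfl⟩
  exact Γ₀.mul_mul_inv_mem_closure_inter_pow h1 hF (hRF hr) (hRF (hR.toRightFun _).2) hf
    (hR.mul_inv_toRightFun_mem _)

theorem finite_index_subgroup_generators (Γ : Type) [Group Γ] (F : Set Γ)
    (hF : F.Finite) (h1 : (1 : Γ) ∈ F) (hgen : Subgroup.closure (F ∪ F⁻¹) = ⊤)
    (Γ₀ : Subgroup Γ) (k : ℕ) (hk : 0 < k) (hidx : Γ₀.index = k) :
    ∃ S : Set Γ, S ⊆ F ^ (2 * k + 1) ∧ Subgroup.closure S = Γ₀ :=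
  finite_index_subgroup_generators_general Γ F h1 hgen Γ₀ k hk hidx
end
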